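/- arXiv:2409.18563 — 7 statements merged into one kernel-verified Lean document; each statement's English description precedes it below -/
import Mathlib

section
/- Let G be a linearly ordered abelian group and let g_1, …, g_t ∈ G be elements that generate G as a group (i.e., every element of G is an integer linear combination α_1·g_1 + … + α_t·g_t with α_i ∈ ℤ). Then G has at most t Archimedean equivalence classes of nonzero elements; equivalently, among any t+1 nonzero elements of G, at least two are Archimedean equivalent. -/
/-!
A group generated by `t` elements has `ℤ`-rank at most `t`, so any `t + 1` of its elements are
linearly dependent. On the other hand, nonzero elements lying in pairwise distinct Archimedean
classes are linearly independent: in a nontrivial relation, the term of the largest class cannot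
be cancelled by the others, whose sum lies in a strictly smaller class.
-/

open ArchimedeanClass

namespace ArchimedeanClass

variable {M : Type*} [AddCommGroup M] [LinearOrder M] [IsOrderedAddMonoid M]

theorem inf_le_mk_sum {ι : Type*} (s : Finset ι) (a : ι → M) :
    s.inf (fun i ↦ mk (a i)) ≤ mk (∑ i ∈ s, a i) := by
  induction s using Finset.cons_induction with
  | empty => simp
  | cons i s _ ih =>
    rw [Finset.inf_cons, Finset.sum_cons]
    exact (min_le_min_left _ ih).trans (min_le_mk_add _ _)

theorem linearIndependent_of_injective_mk {K : Type*} [Ring K] [LinearOrder K] [IsOrderedRing K]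
    [Archimedean K] [Module K M] [PosSMulMono K M] {ι : Type*} {x : ι → M} (hx : ∀ i, x i ≠ 0)
    (hinj : Function.Injective (fun i ↦ mk (x i))) : LinearIndependent K x := by
  classical
  rw [linearIndependent_iff']
  intro s c hsum i₀ hi₀
  by_contra hc₀
  set S := s.filter (fun i ↦ c i ≠ 0)
  obtain ⟨j, hjS, hjmin⟩ := S.exists_min_image (fun i ↦ mk (x i)) ⟨i₀, by simp [S, hi₀, hc₀]⟩
  have hcj : c j ≠ 0 := (Finset.mem_filter.mp hjS).2
  have hsumS : ∑ i ∈ S, c i • x i = 0 := by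
    rw [← hsum]
    exact Finset.sum_filter_of_ne fun i _ h hc ↦ h (by rw [hc, zero_smul])
  have hlt : mk (x j) < (S.erase j).inf (fun i ↦ mk (c i • x i)) := by
    rw [Finset.lt_inf_iff (lt_top_iff_ne_top.mpr (by simpa using hx j))]
    intro i hi
    obtain ⟨hij, hiS⟩ := Finset.mem_erase.mp hi
    rw [mk_smul _ (Finset.mem_filter.mp hiS).2]
    exact (hjmin i hiS).lt_of_ne (hinj.ne hij.symm)
  have hj : c j • x j = -∑ i ∈ S.erase j, c i • x i := by
    rw [eq_neg_iff_add_eq_zero, Finset.add_sum_erase S (fun i ↦ c i • x i) hjS, hsumS]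
  have := inf_le_mk_sum (S.erase j) (fun i ↦ c i • x i)
  rw [← mk_neg, ← hj, mk_smul _ hcj] at this
  exact this.not_gt hlt

end ArchimedeanClass

/-- Let `G` be a linearly ordered abelian group generated (as a group)
by `g 0, …, g (t-1)`.  Then among any `t + 1` nonzero elements of `G`, at least two are
Archimedean equivalent, i.e. `G` has at most `t` Archimedean equivalence classes of
nonzero elements.  Here `x` and `y` are Archimedean equivalent when there are naturals
`m, n` with `|x| ≤ n • |y|` and `|y| ≤ m • |x|`. -/
theorem stmt0 {G : Type*} [AddCommGroup G] [LinearOrder G] [IsOrderedAddMonoid G] {t : ℕ}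
    (g : Fin t → G) (hgen : ∀ x : G, ∃ α : Fin t → ℤ, x = ∑ i, α i • g i)
    (x : Fin (t + 1) → G) (hx : ∀ i, x i ≠ 0) :
    ∃ i j : Fin (t + 1), i ≠ j ∧
      ∃ m n : ℕ, |x i| ≤ n • |x j| ∧ |x j| ≤ m • |x i| := by
  have hspan : Submodule.span ℤ (Set.range g) = ⊤ := by
    refine Submodule.eq_top_iff'.mpr fun y ↦ (Submodule.mem_span_range_iff_exists_fun ℤ).mpr ?_
    obtain ⟨α, rfl⟩ := hgen y
    exact ⟨α, rfl⟩
  have : Module.Finite ℤ G := Module.Finite.of_fg_top <|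
    Submodule.fg_iff_exists_fin_generating_family.mpr ⟨t, g, hspan⟩
  have hnotinj : ¬ Function.Injective (fun i ↦ mk (x i)) := fun hinj ↦ by
    have hcard := (linearIndependent_of_injective_mk (K := ℤ) hx hinj).fintype_card_le_finrank
    have hrank := finrank_le_of_span_eq_top hspan
    simp only [Fintype.card_fin] at hcard hrank
    omega
  obtain ⟨i, j, hij, hne⟩ := Function.not_injective_iff.mp hnotinj
  obtain ⟨⟨m, hm⟩, n, hn⟩ := mk_eq_mk.mp hij
  exact ⟨i, j, hne, m, n, hn, hm⟩
end

section
/- Let G be a linearly ordered abelian group that is generated as a group by elements g_1, …, g_t ∈ G. Then there exist vectors v_1, …, v_t ∈ ℝ^t such that for all integers α_1, …, α_t ∈ ℤ: α_1·g_1 + … + α_t·g_t ≤ 0 in G if and only if α_1·v_1 + … + α_t·v_t ≤_lex 0 in ℝ^t. -/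
/-!
By the Hahn embedding theorem, `G` embeds as an ordered group into the lexicographically
ordered Hahn series `Lex ℝ⟦Γ⟧`, where `Γ` is the set of nontrivial Archimedean classes of `G`.
Representatives of distinct Archimedean classes are `ℤ`-linearly independent, so a group
generated by `t` elements has at most `t` such classes. Embedding `Γ` into `Fin t` as an
ordered set turns each Hahn series into a vector of `ℝ^t` (zero outside the image of `Γ`),
compared lexicographically, and `vᵢ` is the vector of the image of `gᵢ`.
-/

open Finset ArchimedeanClass

section LinearIndependent

variable {M : Type*} [AddCommGroup M] [LinearOrder M] [IsOrderedAddMonoid M]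
  {K : Type*} [Ring K] [LinearOrder K] [IsOrderedRing K] [Archimedean K]
  [Module K M] [PosSMulMono K M]

theorem ArchimedeanClass.linearIndependent_of_strictMono {ι : Type*} [LinearOrder ι]
    {x : ι → M} (hx : StrictMono (mk ∘ x)) (hx0 : ∀ i, x i ≠ 0) : LinearIndependent K x := by
  rw [linearIndependent_iff']
  intro s k hsum i hi
  by_contra hki
  set s' := s.filter (k · ≠ 0)
  have hne : s'.Nonempty := ⟨i, by simp [s', hi, hki]⟩
  have hsum' : ∑ j ∈ s', k j • x j = 0 :=
    (sum_filter_of_ne fun j _ h => left_ne_zero_of_smul h).trans hsum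
  have hmono : StrictMonoOn (mk ∘ fun j => k j • x j) s' := by
    intro a ha b hb hab
    rw [coe_filter] at ha hb
    simpa [mk_smul _ ha.2, mk_smul _ hb.2] using hx hab
  -- the sum lies in the Archimedean class of its lowest term, which is not the class of `0`
  have hmk := mk_sum hne hmono
  rw [hsum', mk_zero, mk_smul _ (mem_filter.mp (s'.min'_mem hne)).2, eq_comm,
    mk_eq_top_iff] at hmk
  exact hx0 _ hmk

end LinearIndependent

theorem FiniteArchimedeanClass.nonempty_orderEmbedding_fin {G : Type*} [AddCommGroup G]
    [LinearOrder G] [IsOrderedAddMonoid G] {t : ℕ} (g : Fin t → G)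
    (hg : Submodule.span ℤ (Set.range g) = ⊤) :
    Nonempty (FiniteArchimedeanClass G ↪o Fin t) := by
  have hli : LinearIndependent ℤ fun c : FiniteArchimedeanClass G => c.val.out :=
    linearIndependent_of_strictMono (fun a b hab => by simpa using hab)
      fun c h => c.2 (by simpa [h] using c.val.mk_out.symm)
  have : Finite (FiniteArchimedeanClass G) :=
    hli.finite_of_le_span_finite _ (Set.range g) (hg ▸ le_top)
  have := Fintype.ofFinite (FiniteArchimedeanClass G)
  have hcard : Fintype.card (FiniteArchimedeanClass G) ≤ t := by
    have hle := linearIndependent_le_span _ hli (Set.range g) hg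
    rw [Cardinal.mk_fintype, Nat.cast_le] at hle
    exact hle.trans ((Fintype.card_range_le g).trans (by simp))
  exact ⟨(Fintype.orderIsoFinOfCardEq _ rfl).symm.toOrderEmbedding.trans
    (Fin.castLEOrderEmb hcard)⟩

theorem exists_addMonoidHom_lex_of_orderEmbedding_finiteArchimedeanClass {G : Type*}
    [AddCommGroup G] [LinearOrder G] [IsOrderedAddMonoid G] {ι : Type*} [LinearOrder ι]
    (e : FiniteArchimedeanClass G ↪o ι) :
    ∃ f : G →+ (ι → ℝ), ∀ x y, x ≤ y ↔ toLex (f x) ≤ toLex (f y) := by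
  obtain ⟨φ, hφ, -⟩ := hahnEmbedding_isOrderedAddMonoid G
  let ψ := (HahnSeries.embDomainOrderAddMonoidHom e).comp φ
  have hψ : StrictMono ψ := ψ.monotone'.strictMono_of_injective
    ((HahnSeries.embDomainOrderAddMonoidHom_injective e).comp hφ)
  -- the order of `Lex ℝ⟦ι⟧` is, by definition, the lexicographic order of the coefficients
  exact ⟨AddMonoidHom.mk' (fun x => (ofLex (ψ x)).coeff) fun x y => by ext; simp,
    fun x y => hψ.le_iff_le.symm⟩

/-- If a linearly ordered abelian group `G` is generated by
`g 0, …, g (t-1)`, then there are vectors `v 0, …, v (t-1) ∈ ℝ^t` such that for all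
integers `α 0, …, α (t-1)`: `∑ αᵢ • gᵢ ≤ 0` in `G` iff `∑ αᵢ • vᵢ ≤ 0` in the
lexicographic order on `ℝ^t`. -/
theorem stmt1 {G : Type*} [AddCommGroup G] [LinearOrder G] [IsOrderedAddMonoid G] {t : ℕ}
    (g : Fin t → G) (hgen : ∀ x : G, ∃ α : Fin t → ℤ, x = ∑ i, α i • g i) :
    ∃ v : Fin t → (Fin t → ℝ), ∀ α : Fin t → ℤ,
      (∑ i, α i • g i) ≤ 0 ↔ toLex (∑ i, α i • v i) ≤ toLex (0 : Fin t → ℝ) := by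
  have hspan : Submodule.span ℤ (Set.range g) = ⊤ :=
    Submodule.eq_top_iff'.mpr fun x => by
      obtain ⟨α, rfl⟩ := hgen x
      exact (Submodule.mem_span_range_iff_exists_fun ℤ).mpr ⟨α, rfl⟩
  obtain ⟨e⟩ := FiniteArchimedeanClass.nonempty_orderEmbedding_fin g hspan
  obtain ⟨f, hf⟩ := exists_addMonoidHom_lex_of_orderEmbedding_finiteArchimedeanClass e
  refine ⟨fun i => f (g i), fun α => ?_⟩
  simpa [map_sum, map_zsmul] using hf (∑ i, α i • g i) 0
end

section
/- Let G be a linearly ordered abelian group, let g_1, …, g_t ∈ G, and let N, n ∈ ℕ. Then there exist real numbers ĝ_1, …, ĝ_t ∈ ℝ such that for all integers α_1, …, α_t with |α_i| ≤ 2(N+n) for every i: α_1·g_1 + … + α_t·g_t ≤ 0 in G if and only if α_1·ĝ_1 + … + α_t·ĝ_t ≤ 0 in ℝ. -/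
/-!
By Hahn's embedding theorem `G` is an ordered subgroup of `Lex ℝ⟦Γ⟧`, where a series is positive
iff its lowest nonzero coefficient is. Given finitely many positive series, with orders in a
finite set `T ⊆ Γ`, the additive functional `x ↦ ∑ γ ∈ T, w γ * x.coeff γ` is positive on all of
them as soon as each weight `w γ > 0` is small compared with the weights of the lower orders:
at the order of `x` all lower coefficients of `x` vanish. Applying such a functional `f`, chosen
for the finitely many combinations `∑ αᵢ • gᵢ` in question and their negatives, gives `ĝᵢ = f gᵢ`.
-/

open Finset Filter Topology

namespace HahnSeries

variable {Γ : Type*} [LinearOrder Γ]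

theorem coeff_pos_of_orderTop_eq {R : Type*} [Zero R] [LinearOrder R]
    {x : Lex R⟦Γ⟧} (hx : 0 < x) {γ : Γ} (h : (ofLex x).orderTop = γ) : 0 < (ofLex x).coeff γ := by
  simpa [leadingCoeff, h] using leadingCoeff_pos_iff.2 hx

theorem exists_sum_mul_coeff_pos (T : Finset Γ) (S : Finset (Lex ℝ⟦Γ⟧))
    (hpos : ∀ x ∈ S, 0 < x) (horder : ∀ x ∈ S, ∃ γ ∈ T, (ofLex x).orderTop = γ) :
    ∃ w : Γ → ℝ, ∀ x ∈ S, 0 < ∑ γ ∈ T, w γ * (ofLex x).coeff γ := by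
  classical
  induction T using Finset.induction_on_max generalizing S with
  | empty =>
    refine ⟨0, fun x hx => ?_⟩
    obtain ⟨γ, hγ, -⟩ := horder x hx
    simp at hγ
  | insert a T hlt ih =>
    set S' := S.filter fun x => (ofLex x).orderTop ≠ (a : WithTop Γ)
    obtain ⟨w, hw⟩ := ih S' (fun x hx => hpos x (mem_filter.1 hx).1) fun x hx => by
      obtain ⟨hxS, hxa⟩ := mem_filter.1 hx
      obtain ⟨γ, hγ, hxγ⟩ := horder x hxS
      rcases mem_insert.1 hγ with rfl | hγT
      · exact absurd hxγ hxa
      · exact ⟨γ, hγT, hxγ⟩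
    have hsmall : ∀ᶠ δ in 𝓝[>] (0 : ℝ),
        ∀ x ∈ S', 0 < ∑ γ ∈ T, w γ * (ofLex x).coeff γ + δ * (ofLex x).coeff a := by
      refine (eventually_all_finset S').2 fun x hx => ?_
      refine Tendsto.eventually_const_lt (hw x hx) (tendsto_nhdsWithin_of_tendsto_nhds ?_)
      have hcont : Continuous fun δ : ℝ =>
          ∑ γ ∈ T, w γ * (ofLex x).coeff γ + δ * (ofLex x).coeff a := by
        fun_prop
      simpa using hcont.tendsto 0
    obtain ⟨δ, hδ, hδpos⟩ := (hsmall.and self_mem_nhdsWithin).exists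
    have haT : a ∉ T := fun h => (hlt a h).false
    refine ⟨Function.update w a δ, fun x hx => ?_⟩
    rw [sum_insert haT, Function.update_self, add_comm,
      sum_congr rfl fun γ hγ => by rw [Function.update_of_ne (hlt γ hγ).ne]]
    by_cases hxa : (ofLex x).orderTop = a
    · have hlow : ∑ γ ∈ T, w γ * (ofLex x).coeff γ = 0 := sum_eq_zero fun γ hγ => by
        rw [coeff_eq_zero_of_lt_orderTop (hxa ▸ WithTop.coe_lt_coe.2 (hlt γ hγ)), mul_zero]
      rw [hlow, zero_add]
      exact mul_pos hδpos (coeff_pos_of_orderTop_eq (hpos x hx) hxa)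
    · exact hδ x (mem_filter.2 ⟨hx, hxa⟩)

theorem exists_addMonoidHom_real_pos (S : Finset (Lex ℝ⟦Γ⟧)) :
    ∃ f : Lex ℝ⟦Γ⟧ →+ ℝ, ∀ x ∈ S, 0 < x → 0 < f x := by
  classical
  set P := S.filter (0 < ·)
  set T := (P.image fun x => (ofLex x).orderTop).preimage WithTop.some WithTop.coe_injective.injOn
  obtain ⟨w, hw⟩ := exists_sum_mul_coeff_pos T P (fun x hx => (mem_filter.1 hx).2) fun x hx => by
    obtain ⟨γ, hγ⟩ := WithTop.ne_top_iff_exists.1 (orderTop_ne_top.2 (mem_filter.1 hx).2.ne')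
    exact ⟨γ, mem_preimage.2 (hγ ▸ mem_image_of_mem _ hx), hγ.symm⟩
  refine ⟨AddMonoidHom.mk' (fun x => ∑ γ ∈ T, w γ * (ofLex x).coeff γ) fun x y => ?_,
    fun x hx hpos => hw x (mem_filter.2 ⟨hx, hpos⟩)⟩
  simp only [ofLex_add, coeff_add, mul_add, sum_add_distrib]

end HahnSeries

theorem exists_addMonoidHom_real_pos {G : Type*} [AddCommGroup G] [LinearOrder G]
    [IsOrderedAddMonoid G] (S : Finset G) : ∃ f : G →+ ℝ, ∀ x ∈ S, 0 < x → 0 < f x := by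
  classical
  obtain ⟨φ, hφ, -⟩ := hahnEmbedding_isOrderedAddMonoid G
  obtain ⟨f, hf⟩ := HahnSeries.exists_addMonoidHom_real_pos (S.image φ)
  refine ⟨f.comp φ.toAddMonoidHom, fun x hx hpos => hf _ (mem_image_of_mem φ hx) ?_⟩
  simpa using (OrderHomClass.monotone φ).strictMono_of_injective hφ hpos

theorem exists_addMonoidHom_real_nonpos_iff {G : Type*} [AddCommGroup G] [LinearOrder G]
    [IsOrderedAddMonoid G] (S : Finset G) : ∃ f : G →+ ℝ, ∀ x ∈ S, f x ≤ 0 ↔ x ≤ 0 := by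
  classical
  obtain ⟨f, hf⟩ := exists_addMonoidHom_real_pos (S ∪ S.image Neg.neg)
  refine ⟨f, fun x hx => ⟨fun hfx => not_lt.1 fun hpos => ?_, fun hx0 => ?_⟩⟩
  · exact (hf x (mem_union_left _ hx) hpos).not_ge hfx
  · rcases hx0.lt_or_eq with hneg | rfl
    · have := hf (-x) (mem_union_right _ (mem_image_of_mem _ hx)) (neg_pos.2 hneg)
      rw [map_neg] at this
      linarith
    · simp

/-- For elements `g 0, …, g (t-1)` of a linearly ordered abelian group
`G` and naturals `N, n`, there are reals `gr 0, …, gr (t-1)` such that for all integer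
coefficients `α` with `|αᵢ| ≤ 2(N+n)` for every `i`:
`∑ αᵢ • gᵢ ≤ 0` in `G` iff `∑ αᵢ · grᵢ ≤ 0` in `ℝ`. -/
theorem stmt2 {G : Type*} [AddCommGroup G] [LinearOrder G] [IsOrderedAddMonoid G] {t : ℕ}
    (g : Fin t → G) (N n : ℕ) :
    ∃ gr : Fin t → ℝ, ∀ α : Fin t → ℤ, (∀ i, |α i| ≤ 2 * ((N : ℤ) + n)) →
      ((∑ i, α i • g i) ≤ 0 ↔ (∑ i, (α i : ℝ) * gr i) ≤ 0) := by
  set B : ℤ := 2 * ((N : ℤ) + n)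
  obtain ⟨f, hf⟩ := exists_addMonoidHom_real_nonpos_iff
    ((Finset.Icc (fun _ => -B) (fun _ => B)).image fun α : Fin t → ℤ => ∑ i, α i • g i)
  refine ⟨fun i => f (g i), fun α hα => ?_⟩
  have hbox : α ∈ Finset.Icc (fun _ => -B) (fun _ => B) :=
    mem_Icc.2 ⟨fun i => (abs_le.1 (hα i)).1, fun i => (abs_le.1 (hα i)).2⟩
  rw [← hf _ (mem_image_of_mem _ hbox), map_sum]
  simp only [map_zsmul, zsmul_eq_mul]
end

section
/- For every t ∈ ℕ and every finite set Y ⊆ ℝ^t there exists ε_0 > 0 such that for all ε with 0 < ε < ε_0 and all y = (y_1, …, y_t) ∈ Y: y ≤_lex 0 if and only if Σ_{i=1}^{t} y_i · ε^i ≤ 0. -/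
/-!
Peel off the first coordinate: `∑ yᵢ εⁱ⁺¹ = ε (y₀ + ∑ yᵢ₊₁ εⁱ⁺¹)`, and the inner sum tends to `0`
with `ε`. So for small `ε > 0` the sign of the sum is the sign of `y₀` when `y₀ ≠ 0`, and when
`y₀ = 0` it is the sign of the sum of the tail, exactly as the lexicographic order compares the
head first and then the tail. Induction on `t` gives the statement for one vector, eventually
in `𝓝[>] 0`, and finitely many such eventualities hold simultaneously.
-/

open Filter Topology

namespace Pi

variable {α : Type*} {n : ℕ}

theorem toLex_fin_succ_lt_iff [LT α] (x y : Fin (n + 1) → α) :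
    toLex x < toLex y ↔
      x 0 < y 0 ∨ x 0 = y 0 ∧ toLex (Fin.tail x) < toLex (Fin.tail y) := by
  change (∃ i, _) ↔ _
  simp only [Fin.exists_fin_succ, Fin.forall_fin_succ, Fin.not_lt_zero, Fin.succ_lt_succ_iff,
    Fin.succ_pos, IsEmpty.forall_iff, implies_true, true_and, true_implies, and_assoc,
    exists_and_left]
  exact Iff.rfl

theorem toLex_fin_succ_le_iff [PartialOrder α] (x y : Fin (n + 1) → α) :
    toLex x ≤ toLex y ↔
      x 0 < y 0 ∨ x 0 = y 0 ∧ toLex (Fin.tail x) ≤ toLex (Fin.tail y) := by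
  have heq : x = y ↔ x 0 = y 0 ∧ Fin.tail x = Fin.tail y := by
    simpa only [Fin.cons_self_tail] using
      Fin.cons_inj (x₀ := x 0) (x := Fin.tail x) (y₀ := y 0) (y := Fin.tail y)
  rw [le_iff_lt_or_eq, le_iff_lt_or_eq (a := toLex (Fin.tail x)), toLex_inj, toLex_inj, heq]
  exact (or_congr_left (toLex_fin_succ_lt_iff x y)).trans (by tauto)

end Pi

section PowerSum

variable {R : Type*} [CommSemiring R] {n : ℕ}

theorem sum_mul_pow_succ_fin_succ (y : Fin (n + 1) → R) (ε : R) :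
    ∑ i, y i * ε ^ ((i : ℕ) + 1) = ε * (y 0 + ∑ i, Fin.tail y i * ε ^ ((i : ℕ) + 1)) := by
  simp only [Fin.sum_univ_succ, Fin.val_zero, Fin.val_succ, Fin.tail, mul_add, Finset.mul_sum]
  congr 1 <;> [ring; exact Finset.sum_congr rfl fun i _ => by ring]

theorem tendsto_sum_mul_pow_succ_zero [TopologicalSpace R] [IsTopologicalSemiring R]
    (y : Fin n → R) :
    Tendsto (fun ε => ∑ i, y i * ε ^ ((i : ℕ) + 1)) (𝓝 0) (𝓝 0) := by
  have : Continuous fun ε : R => ∑ i, y i * ε ^ ((i : ℕ) + 1) := by fun_prop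
  simpa using this.tendsto 0

end PowerSum

theorem eventually_toLex_nonpos_iff_sum_nonpos {𝕜 : Type*} [CommRing 𝕜] [LinearOrder 𝕜]
    [IsStrictOrderedRing 𝕜] [TopologicalSpace 𝕜] [OrderTopology 𝕜] [IsTopologicalRing 𝕜]
    {n : ℕ} (y : Fin n → 𝕜) :
    ∀ᶠ ε in 𝓝[>] 0, (toLex y ≤ toLex (0 : Fin n → 𝕜) ↔ ∑ i, y i * ε ^ ((i : ℕ) + 1) ≤ 0) := by
  induction n with
  | zero => simp [Subsingleton.elim y 0]
  | succ n ih =>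
    have hsum : ∀ ε > (0 : 𝕜), ∑ i, y i * ε ^ ((i : ℕ) + 1) ≤ 0 ↔
        y 0 + ∑ i, Fin.tail y i * ε ^ ((i : ℕ) + 1) ≤ 0 := fun ε hε => by
      rw [sum_mul_pow_succ_fin_succ]; exact smul_nonpos_iff_nonpos_of_pos_left hε
    have htail : Tendsto (fun ε => ∑ i, Fin.tail y i * ε ^ ((i : ℕ) + 1)) (𝓝[>] 0) (𝓝 (0 : 𝕜)) :=
      (tendsto_sum_mul_pow_succ_zero (Fin.tail y)).mono_left nhdsWithin_le_nhds
    rw [Pi.toLex_fin_succ_le_iff]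
    rcases lt_trichotomy (y 0) 0 with hneg | hzero | hpos
    · filter_upwards [self_mem_nhdsWithin, htail.eventually_lt_const (neg_pos.2 hneg)]
        with ε hε hlt
      simp only [hsum ε hε, Pi.zero_apply, hneg, true_or, true_iff]
      linarith
    · filter_upwards [self_mem_nhdsWithin, ih (Fin.tail y)] with ε hε hiff
      simp only [hsum ε hε, Pi.zero_apply, hzero, lt_irrefl, false_or, true_and, zero_add]
      exact hiff
    · filter_upwards [self_mem_nhdsWithin, htail.eventually_const_lt (neg_neg_of_pos hpos)]
        with ε hε hlt
      simp only [hsum ε hε, Pi.zero_apply, hpos.not_gt, hpos.ne', false_or, false_and, false_iff]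
      linarith

/-- For every `t` and every finite set `Y ⊆ ℝ^t` there is `ε₀ > 0`
such that for all `0 < ε < ε₀` and every `y = (y_1, …, y_t) ∈ Y`:
`y ≤ 0` lexicographically iff `∑_{i=1}^t y_i · ε^i ≤ 0`. -/
theorem stmt3 {t : ℕ} (Y : Set (Fin t → ℝ)) (hY : Y.Finite) :
    ∃ ε₀ : ℝ, 0 < ε₀ ∧ ∀ ε : ℝ, 0 < ε → ε < ε₀ → ∀ y ∈ Y,
      (toLex y ≤ toLex (0 : Fin t → ℝ) ↔ ∑ i : Fin t, y i * ε ^ ((i : ℕ) + 1) ≤ 0) := by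
  have h := (eventually_all_finite hY).2 fun y _ => eventually_toLex_nonpos_iff_sum_nonpos y
  obtain ⟨ε₀, hε₀, hsub⟩ := mem_nhdsGT_iff_exists_Ioo_subset.1 h
  exact ⟨ε₀, hε₀, fun ε hε hεε₀ => hsub ⟨hε, hεε₀⟩⟩
end

section
/- Let t, d, s, k be positive integers, let H ⊆ ℝ^t be a finite set with inference dimension at most d and with |H| ≥ s·k, and let x ∈ ℝ^t. If S is chosen uniformly at random among all subsets of H of cardinality s·k, then the probability that |H \ infer(S, x)| ≥ (2d/(s+1))·|H| is at most (1/2)^k. (In the paper this is applied with k = c·log_2 n, giving probability at most 1/n^c.) -/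
/-!
Inference dimension at most `d` means that in any `T ⊆ H` fewer than `d` points fail to be
inferred from the rest of `T`: repeatedly discard a point inferred from the others. Fix a sample
`T` and add `s` new points `U` uniformly from `H \ T`. A point `h` not inferred from `T ∪ U` lies
outside `T ∪ U`, and is then a point of the `(s+1)`-set `U ∪ {h}` not inferred from `T` and the
others; double counting these pairs gives `E |H \ infer(T ∪ U)| ≤ d |H| / (s+1)`, so by Markov's
inequality `T ∪ U` is bad with probability at most `1/2`. Badness passes to subsets, so a bad
sample of size `s k` is built from bad samples of sizes `0, s, 2s, …`, and counting these chains
gives the bound `(1/2)^k`.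
-/

open scoped Classical

noncomputable section

/-- The standard inner product on `Fin t → ℝ`. -/
def qInner {t : ℕ} (u v : Fin t → ℝ) : ℝ := ∑ i, u i * v i

/-- `y` is query-consistent with `x` on `S`: all label queries and all comparison
queries on `S` give the same answers for `y` as for `x`. -/
def QueryConsistent {t : ℕ} (S : Set (Fin t → ℝ)) (x y : Fin t → ℝ) : Prop :=
  (∀ h ∈ S, Real.sign (qInner h y) = Real.sign (qInner h x)) ∧
  (∀ h ∈ S, ∀ h' ∈ S, Real.sign (qInner (h - h') y) = Real.sign (qInner (h - h') x))

/-- `infer S x` is the set of points `h` whose sign `sign ⟨h, x⟩` is fully determined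
by the answers to the label and comparison queries on `S` at `x`. -/
def infer {t : ℕ} (S : Set (Fin t → ℝ)) (x : Fin t → ℝ) : Set (Fin t → ℝ) :=
  {h | ∀ y : Fin t → ℝ, QueryConsistent S x y →
    Real.sign (qInner h y) = Real.sign (qInner h x)}

/-- The inference dimension of a finite set `H ⊆ ℝ^t`: the smallest `d ≥ 1` such that
for every `S ⊆ H` with `|S| ≥ d` and every `x` there is `h ∈ S` with
`h ∈ infer (S \ {h}) x`. -/
def inferenceDim {t : ℕ} (H : Finset (Fin t → ℝ)) : ℕ :=
  sInf {d | 1 ≤ d ∧ ∀ S : Finset (Fin t → ℝ), S ⊆ H → d ≤ S.card →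
    ∀ x : Fin t → ℝ, ∃ h ∈ S, h ∈ infer (↑(S.erase h)) x}

open Finset

section Combinatorics

variable {α : Type*} [DecidableEq α]

theorem card_filter_mul_le_sum {ι : Type*} (A : Finset ι) (f : ι → ℝ)
    (hf : ∀ a ∈ A, 0 ≤ f a) (ε : ℝ) :
    (#{a ∈ A | ε ≤ f a} : ℝ) * ε ≤ ∑ a ∈ A, f a := by
  calc (#{a ∈ A | ε ≤ f a} : ℝ) * ε = #{a ∈ A | ε ≤ f a} • ε := (nsmul_eq_mul _ _).symm
    _ ≤ ∑ a ∈ A with ε ≤ f a, f a := card_nsmul_le_sum _ _ _ fun a ha => (mem_filter.1 ha).2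
    _ ≤ ∑ a ∈ A, f a := sum_le_sum_of_subset_of_nonneg (filter_subset _ _) fun a ha _ => hf a ha

theorem sum_card_filter_sdiff_eq_sum_card_filter_erase (R : Finset α) (s : ℕ)
    (P : Finset α → α → Prop) [∀ U h, Decidable (P U h)] :
    ∑ U ∈ R.powersetCard s, #{h ∈ R \ U | P U h} =
      ∑ V ∈ R.powersetCard (s + 1), #{h ∈ V | P (V.erase h) h} := by
  simp only [← card_sigma]
  refine card_nbij' (fun p => ⟨insert p.2 p.1, p.2⟩) (fun p => ⟨p.1.erase p.2, p.2⟩)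
    ?_ ?_ ?_ ?_
  · rintro ⟨U, h⟩ hp
    simp only [coe_sigma, Set.mem_sigma_iff, mem_coe, mem_powersetCard, mem_filter,
      mem_sdiff] at hp ⊢
    obtain ⟨⟨hUR, rfl⟩, ⟨hhR, hhU⟩, hP⟩ := hp
    exact ⟨⟨insert_subset hhR hUR, card_insert_of_notMem hhU⟩, mem_insert_self _ _,
      by rwa [erase_insert hhU]⟩
  · rintro ⟨V, h⟩ hp
    simp only [coe_sigma, Set.mem_sigma_iff, mem_coe, mem_powersetCard, mem_filter,
      mem_sdiff] at hp ⊢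
    obtain ⟨⟨hVR, hVcard⟩, hhV, hP⟩ := hp
    exact ⟨⟨(erase_subset _ _).trans hVR, by rw [card_erase_of_mem hhV, hVcard]; rfl⟩,
      ⟨hVR hhV, notMem_erase _ _⟩, hP⟩
  · rintro ⟨U, h⟩ hp
    simp only [coe_sigma, Set.mem_sigma_iff, mem_coe, mem_filter, mem_sdiff] at hp
    simp [erase_insert hp.2.1.2]
  · rintro ⟨V, h⟩ hp
    simp only [coe_sigma, Set.mem_sigma_iff, mem_coe, mem_filter] at hp
    simp [insert_erase hp.2.1]

theorem card_filter_superset_powersetCard {H T : Finset α} (hTH : T ⊆ H) (s : ℕ)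
    (P : Finset α → Prop) [DecidablePred P] :
    #{S ∈ H.powersetCard (#T + s) | T ⊆ S ∧ P S} =
      #{U ∈ (H \ T).powersetCard s | P (T ∪ U)} := by
  refine card_nbij' (· \ T) (T ∪ ·) ?_ ?_ ?_ ?_
  · intro S hS
    simp only [mem_coe, mem_filter, mem_powersetCard] at hS ⊢
    obtain ⟨⟨hSH, hScard⟩, hTS, hPS⟩ := hS
    refine ⟨⟨sdiff_subset_sdiff hSH subset_rfl, ?_⟩, by rwa [union_sdiff_of_subset hTS]⟩
    rw [card_sdiff_of_subset hTS, hScard, Nat.add_sub_cancel_left]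
  · intro U hU
    simp only [mem_coe, mem_filter, mem_powersetCard, subset_sdiff] at hU ⊢
    obtain ⟨⟨⟨hUH, hUT⟩, hUcard⟩, hPU⟩ := hU
    exact ⟨⟨union_subset hTH hUH, by rw [card_union_of_disjoint hUT.symm, hUcard]⟩,
      subset_union_left, hPU⟩
  · intro S hS
    simp only [mem_coe, mem_filter] at hS
    exact union_sdiff_of_subset hS.2.1
  · intro U hU
    simp only [mem_coe, mem_filter, mem_powersetCard, subset_sdiff] at hU
    exact union_sdiff_cancel_left hU.1.1.2.symm

variable {H : Finset α} {Bad : Finset α → Prop} [DecidablePred Bad]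

theorem two_mul_card_filter_powersetCard_add_mul_choose_le
    (hBad : ∀ ⦃T S⦄, T ⊆ S → Bad S → Bad T) {m s : ℕ}
    (hhalf : ∀ T ⊆ H, #T = m →
      2 * #{U ∈ (H \ T).powersetCard s | Bad (T ∪ U)} ≤ (#H - m).choose s) :
    2 * #{S ∈ H.powersetCard (m + s) | Bad S} * (m + s).choose m ≤
      #{T ∈ H.powersetCard m | Bad T} * (#H - m).choose s := by
  set small := {T ∈ H.powersetCard m | Bad T}
  set large := {S ∈ H.powersetCard (m + s) | Bad S}
  have hbelow : ∀ S ∈ large, #(small.bipartiteBelow (· ⊆ ·) S) = (m + s).choose m := by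
    intro S hS
    simp only [large, mem_filter, mem_powersetCard] at hS
    rw [← hS.1.2, ← card_powersetCard]
    congr 1
    ext T
    simp only [bipartiteBelow, small, mem_filter, mem_powersetCard]
    exact ⟨fun h => ⟨h.2, h.1.1.2⟩,
      fun h => ⟨⟨⟨h.1.trans hS.1.1, h.2⟩, hBad h.1 hS.2⟩, h.1⟩⟩
  have habove :
      ∀ T ∈ small, 2 * #(large.bipartiteAbove (· ⊆ ·) T) ≤ (#H - m).choose s := by
    intro T hT
    simp only [small, mem_filter, mem_powersetCard] at hT
    obtain ⟨⟨hTH, rfl⟩, -⟩ := hT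
    have hsupersets : large.bipartiteAbove (· ⊆ ·) T =
        {S ∈ H.powersetCard (#T + s) | T ⊆ S ∧ Bad S} := by
      simp only [bipartiteAbove, large, filter_filter, and_comm]
    rw [hsupersets, card_filter_superset_powersetCard hTH]
    exact hhalf T hTH rfl
  calc 2 * #large * (m + s).choose m
        = ∑ S ∈ large, 2 * #(small.bipartiteBelow (· ⊆ ·) S) := by
        rw [sum_congr rfl fun S hS => by rw [hbelow S hS], sum_const, smul_eq_mul]; ring
    _ = ∑ T ∈ small, 2 * #(large.bipartiteAbove (· ⊆ ·) T) := by
        rw [← mul_sum, ← mul_sum, sum_card_bipartiteAbove_eq_sum_card_bipartiteBelow]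
    _ ≤ ∑ _T ∈ small, (#H - m).choose s := sum_le_sum habove
    _ = #small * (#H - m).choose s := by rw [sum_const, smul_eq_mul]

theorem two_pow_mul_card_filter_powersetCard_le
    (hBad : ∀ ⦃T S⦄, T ⊆ S → Bad S → Bad T) {s : ℕ}
    (hhalf : ∀ T ⊆ H,
      2 * #{U ∈ (H \ T).powersetCard s | Bad (T ∪ U)} ≤ (#H - #T).choose s) (j : ℕ) :
    2 ^ j * #{S ∈ H.powersetCard (s * j) | Bad S} ≤ (#H).choose (s * j) := by
  induction j with
  | zero => simpa using card_filter_le (H.powersetCard 0) Bad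
  | succ j ih =>
    have hstep := two_mul_card_filter_powersetCard_add_mul_choose_le hBad (m := s * j)
      fun T hTH hT => hT ▸ hhalf T hTH
    have hchoose := Nat.choose_mul (n := #H) (Nat.le_add_right (s * j) s)
    rw [Nat.add_sub_cancel_left, ← Nat.mul_succ] at hchoose
    rw [← Nat.mul_succ] at hstep
    refine Nat.le_of_mul_le_mul_right ?_ (Nat.choose_pos (Nat.mul_le_mul_left s j.le_succ))
    calc 2 ^ (j + 1) * #{S ∈ H.powersetCard (s * (j + 1)) | Bad S} * (s * (j + 1)).choose (s * j)
        = 2 ^ j * (2 * #{S ∈ H.powersetCard (s * (j + 1)) | Bad S} *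
            (s * (j + 1)).choose (s * j)) := by ring
      _ ≤ 2 ^ j * (#{T ∈ H.powersetCard (s * j) | Bad T} * (#H - s * j).choose s) :=
          Nat.mul_le_mul_left _ hstep
      _ ≤ (#H).choose (s * j) * (#H - s * j).choose s := by
          rw [← mul_assoc]; exact Nat.mul_le_mul_right _ ih
      _ = (#H).choose (s * (j + 1)) * (s * (j + 1)).choose (s * j) := hchoose.symm

end Combinatorics

section Inference

variable {t d : ℕ} {H : Finset (Fin t → ℝ)}

theorem infer_mono {S S' : Set (Fin t → ℝ)} (hSS' : S ⊆ S') (x : Fin t → ℝ) :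
    infer S x ⊆ infer S' x :=
  fun _ hh y hy => hh y
    ⟨fun g hg => hy.1 g (hSS' hg), fun g hg g' hg' => hy.2 g (hSS' hg) g' (hSS' hg')⟩

theorem subset_infer (S : Set (Fin t → ℝ)) (x : Fin t → ℝ) : S ⊆ infer S x :=
  fun h hh _ hy => hy.1 h hh

theorem card_filter_notMem_infer_anti (x : Fin t → ℝ) {T S : Finset (Fin t → ℝ)}
    (hTS : T ⊆ S) :
    #{h ∈ H | h ∉ infer ↑S x} ≤ #{h ∈ H | h ∉ infer ↑T x} :=
  card_le_card <| monotone_filter_right _ fun _ _ hS hT => hS (infer_mono (coe_subset.2 hTS) x hT)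

theorem exists_mem_infer_erase_of_inferenceDim_le (hdim : inferenceDim H ≤ d)
    {S : Finset (Fin t → ℝ)} (hSH : S ⊆ H) (hdS : d ≤ #S) (x : Fin t → ℝ) :
    ∃ h ∈ S, h ∈ infer ↑(S.erase h) x := by
  have hne : #H + 1 ∈ {e | 1 ≤ e ∧ ∀ S : Finset (Fin t → ℝ), S ⊆ H → e ≤ #S →
      ∀ x : Fin t → ℝ, ∃ h ∈ S, h ∈ infer ↑(S.erase h) x} :=
    ⟨Nat.le_add_left 1 _, fun S hSH hS => absurd (card_le_card hSH) (by omega)⟩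
  exact (Nat.sInf_mem ⟨_, hne⟩).2 S hSH (hdim.trans hdS) x

theorem card_filter_notMem_infer_erase_lt (hdim : inferenceDim H ≤ d) (x : Fin t → ℝ)
    {T : Finset (Fin t → ℝ)} (hTH : T ⊆ H) :
    #{h ∈ T | h ∉ infer ↑(T.erase h) x} < d := by
  induction T using Finset.strongInduction with
  | H T ih =>
  by_cases hdT : d ≤ #T
  · obtain ⟨h₀, hh₀T, hh₀⟩ := exists_mem_infer_erase_of_inferenceDim_le hdim hTH hdT x
    -- discarding `h₀` can only shrink the sets the other points are inferred from
    refine (card_le_card fun h hh => ?_).trans_lt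
      (ih _ (erase_ssubset hh₀T) ((erase_subset _ _).trans hTH))
    simp only [mem_filter, mem_erase] at hh ⊢
    refine ⟨⟨fun hh₀h => hh.2 (hh₀h ▸ hh₀), hh.1⟩, fun hinf => hh.2 ?_⟩
    exact infer_mono (coe_subset.2 (erase_subset_erase h (erase_subset h₀ T))) x hinf
  · exact (card_filter_le _ _).trans_lt (not_le.1 hdT)

theorem sum_card_filter_notMem_infer_union_le (hdim : inferenceDim H ≤ d) (x : Fin t → ℝ)
    {T : Finset (Fin t → ℝ)} (hTH : T ⊆ H) (s : ℕ) :
    ∑ U ∈ (H \ T).powersetCard s, #{h ∈ H | h ∉ infer ↑(T ∪ U) x} ≤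
      (#(H \ T)).choose (s + 1) * d := by
  calc ∑ U ∈ (H \ T).powersetCard s, #{h ∈ H | h ∉ infer ↑(T ∪ U) x}
      ≤ ∑ U ∈ (H \ T).powersetCard s, #{h ∈ (H \ T) \ U | h ∉ infer ↑(T ∪ U) x} := by
        refine sum_le_sum fun U _ => card_le_card fun h hh => ?_
        simp only [mem_filter, mem_sdiff] at hh ⊢
        have hTU : h ∉ T ∪ U := fun hTU => hh.2 (subset_infer _ x (mem_coe.2 hTU))
        simp only [mem_union, not_or] at hTU
        exact ⟨⟨⟨hh.1, hTU.1⟩, hTU.2⟩, hh.2⟩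
    _ = ∑ V ∈ (H \ T).powersetCard (s + 1), #{h ∈ V | h ∉ infer ↑(T ∪ V.erase h) x} :=
        sum_card_filter_sdiff_eq_sum_card_filter_erase _ s fun U h => h ∉ infer ↑(T ∪ U) x
    _ ≤ ∑ _V ∈ (H \ T).powersetCard (s + 1), d := by
        refine sum_le_sum fun V hV => ?_
        have hVH : T ∪ V ⊆ H := union_subset hTH ((mem_powersetCard.1 hV).1.trans sdiff_subset)
        refine (card_le_card fun h hh => ?_).trans (card_filter_notMem_infer_erase_lt hdim x hVH).le
        simp only [mem_filter, mem_union] at hh ⊢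
        refine ⟨Or.inr hh.1, fun hinf => hh.2 (infer_mono ?_ x hinf)⟩
        rw [coe_subset, erase_union_distrib]
        exact union_subset_union (erase_subset _ _) subset_rfl
    _ = (#(H \ T)).choose (s + 1) * d := by rw [sum_const, card_powersetCard, smul_eq_mul]

theorem two_mul_card_filter_infer_union_le_choose (hdim : inferenceDim H ≤ d) (x : Fin t → ℝ)
    {s : ℕ} (hs : 0 < s) {T : Finset (Fin t → ℝ)} (hTH : T ⊆ H) :
    2 * #{U ∈ (H \ T).powersetCard s |
        2 * (d : ℝ) / ((s : ℝ) + 1) * (#H : ℝ) ≤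
          (#{h ∈ H | h ∉ infer ↑(T ∪ U) x} : ℝ)} ≤
      (#H - #T).choose s := by
  rcases H.eq_empty_or_nonempty with rfl | hH
  · simp [Nat.choose_eq_zero_of_lt hs]
  rw [← card_sdiff_of_subset hTH]
  set N := #(H \ T)
  set ε := 2 * (d : ℝ) / ((s : ℝ) + 1) * (#H : ℝ)
  set A := #{U ∈ (H \ T).powersetCard s | ε ≤ (#{h ∈ H | h ∉ infer ↑(T ∪ U) x} : ℝ)}
  have hd : 0 < d := Nat.zero_lt_of_lt (card_filter_notMem_infer_erase_lt hdim x (empty_subset H))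
  have hεpos : 0 < ε := by have := hH.card_pos; positivity
  have hmarkov : (A : ℝ) * ε ≤ N.choose (s + 1) * d := by
    refine (card_filter_mul_le_sum _ _ (fun _ _ => Nat.cast_nonneg _) ε).trans ?_
    exact_mod_cast sum_card_filter_notMem_infer_union_le hdim x hTH s
  have hchoose : (N.choose (s + 1) : ℝ) * (s + 1) ≤ N.choose s * #H := by
    have hNH : N - s ≤ #H := (Nat.sub_le N s).trans (card_le_card sdiff_subset)
    exact_mod_cast (Nat.choose_succ_right_eq N s).trans_le (Nat.mul_le_mul_left _ hNH)
  have hεs : ε * ((s : ℝ) + 1) = 2 * d * #H := by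
    simp only [ε]; field_simp
  suffices (2 * A : ℝ) * ε ≤ N.choose s * ε by
    exact_mod_cast le_of_mul_le_mul_right this hεpos
  -- `hmarkov` times `2 (s + 1)`, then `hchoose` and `hεs`
  nlinarith

end Inference

-- In `stmt4`, `infer (↑S) x` makes `S` a `Set`, so the filter there runs over the image of
-- `powersetCard` in `Finset (Set _)`.
theorem card_filter_coe_eq_card_filter {α : Type*} (P : Finset (Finset α)) (Q : Set α → Prop) :
    #{S ∈ (↑P : Finset (Set α)) | Q S} = #(P.filter fun S : Finset α => Q ↑S) := by
  rw [bind_pure_comp, fmap_def, filter_image]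
  exact card_image_of_injective _ coe_injective

theorem stmt4_general {t d s k : ℕ} (hs : 0 < s)
    (H : Finset (Fin t → ℝ)) (hdim : inferenceDim H ≤ d)
    (x : Fin t → ℝ) :
    (((H.powersetCard (s * k)).filter fun S =>
        (2 * (d : ℝ) / ((s : ℝ) + 1)) * (H.card : ℝ) ≤
          ((H.filter fun h => h ∉ infer (↑S) x).card : ℝ)).card : ℝ)
      ≤ (1 / 2 : ℝ) ^ k * ((H.powersetCard (s * k)).card : ℝ) := by
  rw [card_filter_coe_eq_card_filter]
  have hchain := two_pow_mul_card_filter_powersetCard_le (H := H)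
    (Bad := fun S =>
      2 * (d : ℝ) / ((s : ℝ) + 1) * (#H : ℝ) ≤ (#{h ∈ H | h ∉ infer ↑S x} : ℝ))
    (fun T S hTS (hS : _ ≤ _) => hS.trans (by exact_mod_cast card_filter_notMem_infer_anti x hTS))
    (fun T hTH => two_mul_card_filter_infer_union_le_choose hdim x hs hTH) k
  rw [card_powersetCard, one_div, inv_pow, inv_mul_eq_div, le_div_iff₀ (by positivity)]
  exact_mod_cast (mul_comm _ _).trans_le hchain

/-- Let `t, d, s, k` be positive integers, `H ⊆ ℝ^t` finite with
inference dimension at most `d` and `|H| ≥ s·k`, and `x ∈ ℝ^t`.  If `S` is chosen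
uniformly among all subsets of `H` of cardinality `s·k`, then the probability that
`|H \ infer(S, x)| ≥ (2d/(s+1))·|H|` is at most `(1/2)^k`; stated by counting: the
number of bad subsets is at most `(1/2)^k` times the number of all size-`s·k` subsets. -/
theorem stmt4 {t d s k : ℕ} (ht : 0 < t) (hd : 0 < d) (hs : 0 < s) (hk : 0 < k)
    (H : Finset (Fin t → ℝ)) (hdim : inferenceDim H ≤ d) (hcard : s * k ≤ H.card)
    (x : Fin t → ℝ) :
    (((H.powersetCard (s * k)).filter fun S =>
        (2 * (d : ℝ) / ((s : ℝ) + 1)) * (H.card : ℝ) ≤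
          ((H.filter fun h => h ∉ infer (↑S) x).card : ℝ)).card : ℝ)
      ≤ (1 / 2 : ℝ) ^ k * ((H.powersetCard (s * k)).card : ℝ) :=
  stmt4_general hs H hdim x

end
end

section
/- Let b ∈ ℕ and let p, p', q, q' be integers with |p| ≤ 2^b, |p'| ≤ 2^b, 1 ≤ q ≤ 2^b and 1 ≤ q' ≤ 2^b. Then p/q < p'/q' (as rational numbers) if and only if ⌊p·4^{b+1}/q⌋ < ⌊p'·4^{b+1}/q'⌋, i.e., replacing each rational p_i/q_i by the integer ⌊p_i·4^{b+1}/q_i⌋ does not change the relative order of the numbers. -/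
/-- If `p, p', q, q'` are integers with `|p|, |p'| ≤ 2^b` and
`1 ≤ q, q' ≤ 2^b`, then `p/q < p'/q'` as rationals iff
`⌊p·4^(b+1)/q⌋ < ⌊p'·4^(b+1)/q'⌋`; i.e. replacing each rational `pᵢ/qᵢ` by the integer
`⌊pᵢ·4^(b+1)/qᵢ⌋` does not change the relative order. -/
theorem stmt7 (b : ℕ) (p p' q q' : ℤ)
    (hp : |p| ≤ 2 ^ b) (hp' : |p'| ≤ 2 ^ b)
    (hq1 : 1 ≤ q) (hq2 : q ≤ 2 ^ b) (hq'1 : 1 ≤ q') (hq'2 : q' ≤ 2 ^ b) :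
    (p : ℚ) / (q : ℚ) < (p' : ℚ) / (q' : ℚ) ↔
      ⌊((p : ℚ) * 4 ^ (b + 1)) / (q : ℚ)⌋ < ⌊((p' : ℚ) * 4 ^ (b + 1)) / (q' : ℚ)⌋ := by
  have hqQ : (0:ℚ) < (q:ℚ) := by exact_mod_cast lt_of_lt_of_le one_pos hq1
  have hq'Q : (0:ℚ) < (q':ℚ) := by exact_mod_cast lt_of_lt_of_le one_pos hq'1
  have hq2Q : (q:ℚ) ≤ 2 ^ b := by exact_mod_cast hq2
  have hq'2Q : (q':ℚ) ≤ 2 ^ b := by exact_mod_cast hq'2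
  constructor
  · intro h
    rw [div_lt_div_iff₀ hqQ hq'Q] at h
    have hZ : p * q' + 1 ≤ p' * q := by exact_mod_cast h
    have hZQ : (p:ℚ) * q' + 1 ≤ (p':ℚ) * q := by exact_mod_cast hZ
    rw [Int.lt_iff_add_one_le, Int.le_floor]
    push_cast
    have h1 : (⌊((p : ℚ) * 4 ^ (b + 1)) / (q : ℚ)⌋ : ℚ) ≤ ((p : ℚ) * 4 ^ (b + 1)) / (q : ℚ) :=
      Int.floor_le _
    have h2 : ((p : ℚ) * 4 ^ (b + 1)) / (q : ℚ) + 1 ≤ ((p' : ℚ) * 4 ^ (b + 1)) / (q' : ℚ) := by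
      rw [div_add' _ _ _ (ne_of_gt hqQ), div_le_div_iff₀ hqQ hq'Q]
      have hpow : ((4:ℚ)) ^ (b+1) = 4 * (2:ℚ)^b * (2:ℚ)^b := by
        rw [pow_succ, show (4:ℚ) = 2*2 by norm_num, mul_pow]; ring
      nlinarith [mul_pos hqQ hq'Q, pow_pos (by norm_num : (0:ℚ) < 2) b,
        mul_le_mul hq2Q hq'2Q (le_of_lt hq'Q) (le_of_lt (pow_pos (by norm_num : (0:ℚ) < 2) b))]
    linarith
  · contrapose
    intro h
    push_neg at h ⊢
    have hle : (p':ℚ) / q' ≤ (p:ℚ) / q := h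
    refine Int.floor_le_floor ?_
    have := mul_le_mul_of_nonneg_right hle (by positivity : (0:ℚ) ≤ 4 ^ (b+1))
    rwa [div_mul_eq_mul_div, div_mul_eq_mul_div] at this
end

section
/- Let G be a directed graph with distinguished nodes s and t such that every node is reachable from s and t is reachable from every node, and let T be a spanning in-tree of G rooted at t (for every node v, the unique T-path from v to t exists). Call the edges of G that are not edges of T sidetrack edges. Then the map assigning to each s-to-t path of G its subsequence of sidetrack edges is a bijection between the s-to-t paths of G and the valid sequences of sidetrack edges, where a sequence (u_1, v_1), (u_2, v_2), …, (u_k, v_k) of sidetrack edges (including the empty sequence) is valid if u_1 lies on the T-path from s to t and, for every i ∈ {1, …, k−1}, the node u_{i+1} lies on the T-path from v_i to t. -/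
open scoped Classical

/-- Paths in a directed graph given by edge source and target maps: a path from `u`
to `v` is a list of edges in which the target of each edge is the source of the next,
the first edge (if any) starts at `u`, and the path ends at `v` (the empty list is a
path from `v` to `v`). -/
inductive IsPath {V E : Type*} (src tgt : E → V) : V → V → List E → Prop
  | nil (v : V) : IsPath src tgt v v []
  | cons {u v z : V} {e : E} {P : List E} :
      src e = u → tgt e = v → IsPath src tgt v z P → IsPath src tgt u z (e :: P)

/-- `u` is reachable from `v` in the subgraph with edge set `TE`: there is a path from
`v` to `u` using only edges of `TE`.  (For a spanning in-tree `TE` rooted at `t`, this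
holds exactly when `u` lies on the tree path from `v` to `t`.) -/
def TReach {V E : Type*} (src tgt : E → V) (TE : Set E) (v u : V) : Prop :=
  ∃ P, IsPath src tgt v u P ∧ ∀ e ∈ P, e ∈ TE

/-- A sequence of sidetrack edges (edges not in `TE`) is valid if the source of its
first edge is reachable from `s` in the tree, and the source of each subsequent edge
is reachable in the tree from the target of the previous edge. -/
def ValidSeq {V E : Type*} (src tgt : E → V) (TE : Set E) (s : V) (L : List E) : Prop :=
  (∀ e ∈ L, e ∉ TE) ∧
  (∀ e, L.head? = some e → TReach src tgt TE s (src e)) ∧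
  List.Chain' (fun e e' => TReach src tgt TE (tgt e) (src e')) L


/-! Between two consecutive sidetrack edges an `s`-`t` path can only follow tree edges, and a
tree path between two nodes is unique, since appending the tree path to `t` gives the unique
tree path to `t`. So a path is determined by its sidetrack edges; conversely, a valid sequence
is realised by joining its edges with tree paths and closing with the tree path to `t`. -/

section

variable {V E : Type*} {src tgt : E → V} {TE : Set E}

namespace IsPath

theorem append {u v w : V} {P Q : List E} (hP : IsPath src tgt u v P)
    (hQ : IsPath src tgt v w Q) : IsPath src tgt u w (P ++ Q) := by
  induction hP with
  | nil => exact hQ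
  | cons h₁ h₂ _ ih => exact .cons h₁ h₂ (ih hQ)

theorem of_append_cons {u w : V} {Q R : List E} {e : E}
    (h : IsPath src tgt u w (Q ++ e :: R)) :
    IsPath src tgt u (src e) Q ∧ IsPath src tgt (tgt e) w R := by
  induction Q generalizing u with
  | nil =>
    cases h with
    | cons h₁ h₂ hR => exact ⟨h₁ ▸ .nil _, h₂ ▸ hR⟩
  | cons f Q ih =>
    cases h with
    | cons h₁ h₂ hQR =>
      obtain ⟨hQ, hR⟩ := ih hQR
      exact ⟨.cons h₁ h₂ hQ, hR⟩

end IsPath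

theorem TReach.refl (v : V) : TReach src tgt TE v v := ⟨[], .nil v, by simp⟩

theorem TReach.cons {e : E} {w : V} (he : e ∈ TE) (h : TReach src tgt TE (tgt e) w) :
    TReach src tgt TE (src e) w := by
  obtain ⟨P, hP, hPT⟩ := h
  exact ⟨e :: P, .cons rfl rfl hP, List.forall_mem_cons.2 ⟨he, hPT⟩⟩

theorem treePath_unique {t v w : V} {Q₁ Q₂ : List E}
    (htree : ∀ v, ∃! P, IsPath src tgt v t P ∧ ∀ e ∈ P, e ∈ TE)
    (h₁ : IsPath src tgt v w Q₁) (hQ₁ : ∀ e ∈ Q₁, e ∈ TE)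
    (h₂ : IsPath src tgt v w Q₂) (hQ₂ : ∀ e ∈ Q₂, e ∈ TE) : Q₁ = Q₂ := by
  obtain ⟨S, ⟨hS, hST⟩, -⟩ := htree w
  exact List.append_cancel_right <| (htree v).unique
    ⟨h₁.append hS, List.forall_mem_append.2 ⟨hQ₁, hST⟩⟩
    ⟨h₂.append hS, List.forall_mem_append.2 ⟨hQ₂, hST⟩⟩

theorem validSeq_nil (v : V) : ValidSeq src tgt TE v [] :=
  ⟨by simp, by simp, List.isChain_nil⟩

theorem validSeq_cons_iff {v : V} {e : E} {L : List E} :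
    ValidSeq src tgt TE v (e :: L) ↔
      e ∉ TE ∧ TReach src tgt TE v (src e) ∧ ValidSeq src tgt TE (tgt e) L := by
  -- `List.Chain'` in `ValidSeq` is `List.IsChain` only up to unfolding, which `simp` does not see.
  have hchain : List.IsChain (fun e e' => TReach src tgt TE (tgt e) (src e')) (e :: L) ↔ _ :=
    List.isChain_cons
  simp only [ValidSeq, List.forall_mem_cons, List.head?_cons, Option.some.injEq, forall_eq',
    Option.mem_def] at hchain ⊢
  tauto

theorem ValidSeq.of_tree_edge {e : E} {L : List E} (he : e ∈ TE)
    (hL : ValidSeq src tgt TE (tgt e) L) : ValidSeq src tgt TE (src e) L := by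
  cases L with
  | nil => exact validSeq_nil _
  | cons f L =>
    obtain ⟨hf, hreach, hL⟩ := validSeq_cons_iff.1 hL
    exact validSeq_cons_iff.2 ⟨hf, hreach.cons he, hL⟩

theorem IsPath.validSeq_filter {v w : V} {P : List E} (h : IsPath src tgt v w P) :
    ValidSeq src tgt TE v (P.filter fun e => e ∉ TE) := by
  induction h with
  | nil => exact validSeq_nil _
  | @cons u v z e P h₁ h₂ _ ih =>
    subst h₁ h₂
    by_cases he : e ∈ TE
    · rw [List.filter_cons_of_neg (by simpa using he)]
      exact ih.of_tree_edge he
    · rw [List.filter_cons_of_pos (by simpa using he)]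
      exact validSeq_cons_iff.2 ⟨he, .refl _, ih⟩

theorem IsPath.eq_of_filter_eq {t v : V} {P₁ P₂ : List E}
    (htree : ∀ v, ∃! P, IsPath src tgt v t P ∧ ∀ e ∈ P, e ∈ TE)
    (h₁ : IsPath src tgt v t P₁) (h₂ : IsPath src tgt v t P₂)
    (hfilter : P₁.filter (fun e => e ∉ TE) = P₂.filter (fun e => e ∉ TE)) : P₁ = P₂ := by
  generalize hL : P₂.filter (fun e => e ∉ TE) = L at hfilter
  induction L generalizing v P₁ P₂ with
  | nil =>
    simp only [List.filter_eq_nil_iff, decide_eq_true_eq, not_not] at hfilter hL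
    exact (htree v).unique ⟨h₁, hfilter⟩ ⟨h₂, hL⟩
  | cons e L ih =>
    obtain ⟨Q₁, R₁, rfl, hQ₁, -, hR₁⟩ := List.filter_eq_cons_iff.1 hfilter
    obtain ⟨Q₂, R₂, rfl, hQ₂, -, hR₂⟩ := List.filter_eq_cons_iff.1 hL
    obtain ⟨h₁Q, h₁R⟩ := h₁.of_append_cons
    obtain ⟨h₂Q, h₂R⟩ := h₂.of_append_cons
    simp only [decide_eq_true_eq, not_not] at hQ₁ hQ₂
    rw [treePath_unique htree h₁Q hQ₁ h₂Q hQ₂, ih h₁R h₂R hR₂ hR₁]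

theorem ValidSeq.exists_isPath {t v : V} {L : List E} (hroot : ∀ v, TReach src tgt TE v t)
    (hL : ValidSeq src tgt TE v L) :
    ∃ P, IsPath src tgt v t P ∧ P.filter (fun e => e ∉ TE) = L := by
  induction L generalizing v with
  | nil =>
    obtain ⟨P, hP, hPT⟩ := hroot v
    exact ⟨P, hP, List.filter_eq_nil_iff.2 (by simpa using hPT)⟩
  | cons e L ih =>
    obtain ⟨he, ⟨Q, hQ, hQT⟩, hL⟩ := validSeq_cons_iff.1 hL
    obtain ⟨R, hR, hRL⟩ := ih hL
    exact ⟨Q ++ e :: R, hQ.append (.cons rfl rfl hR),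
      List.filter_eq_cons_iff.2 ⟨Q, R, rfl, by simpa using hQT, by simpa using he, hRL⟩⟩

end

theorem stmt11_general {V E : Type*} (src tgt : E → V) (s t : V)
    (TE : Set E)
    (htree : ∀ v, ∃! P, IsPath src tgt v t P ∧ ∀ e ∈ P, e ∈ TE) :
    (∀ P, IsPath src tgt s t P → ValidSeq src tgt TE s (P.filter fun e => e ∉ TE)) ∧
    (∀ P₁ P₂, IsPath src tgt s t P₁ → IsPath src tgt s t P₂ →
        P₁.filter (fun e => e ∉ TE) = P₂.filter (fun e => e ∉ TE) → P₁ = P₂) ∧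
    (∀ L, ValidSeq src tgt TE s L →
        ∃ P, IsPath src tgt s t P ∧ P.filter (fun e => e ∉ TE) = L) :=
  ⟨fun _ hP => hP.validSeq_filter,
    fun _ _ h₁ h₂ => h₁.eq_of_filter_eq htree h₂,
    fun _ hL => hL.exists_isPath fun v => (htree v).exists⟩

/-- Let `G` be a directed graph with distinguished nodes `s`, `t`,
every node reachable from `s` and `t` reachable from every node, and let `TE` be (the
edge set of) a spanning in-tree rooted at `t` (every node has a unique tree path to
`t`).  Then mapping an `s`-to-`t` path to its subsequence of sidetrack edges is a
bijection between the `s`-to-`t` paths of `G` and the valid sequences of sidetrack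
edges. -/
theorem stmt11 {V E : Type*} (src tgt : E → V) (s t : V)
    (hs : ∀ v, ∃ P, IsPath src tgt s v P)
    (ht : ∀ v, ∃ P, IsPath src tgt v t P)
    (TE : Set E)
    (htree : ∀ v, ∃! P, IsPath src tgt v t P ∧ ∀ e ∈ P, e ∈ TE) :
    (∀ P, IsPath src tgt s t P → ValidSeq src tgt TE s (P.filter fun e => e ∉ TE)) ∧
    (∀ P₁ P₂, IsPath src tgt s t P₁ → IsPath src tgt s t P₂ →
        P₁.filter (fun e => e ∉ TE) = P₂.filter (fun e => e ∉ TE) → P₁ = P₂) ∧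
    (∀ L, ValidSeq src tgt TE s L →
        ∃ P, IsPath src tgt s t P ∧ P.filter (fun e => e ∉ TE) = L) :=
  stmt11_general src tgt s t TE htree
end
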